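/- Let h₀ ⊂ h₁ ⊂ ⋯ ⊂ h_N be a chain of distinct pairwise strongly separated half-spaces in a finite-dimensional CAT(0) cubical complex X. Then in the contact graph CX, for all 0 ≤ n, m ≤ N the Gromov product satisfies (ĥ_n | ĥ_m)_{ĥ₀} ≥ min(n, m) − 3. -/

import Mathlib

/-!
A combinatorial model of a finite-dimensional CAT(0) cubical complex:
the vertex set `V` together with its collection of half-spaces `HS ⊆ Set V`,
axiomatized as a pocset of subsets of `V` whose dual (Sageev) complex has
vertex set exactly `V`.
-/

open Set

variable {V : Type*}

/-- Two half-spaces are transverse if all four corner intersections are nonempty. -/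
def Transverse (h k : Set V) : Prop :=
  (h ∩ k).Nonempty ∧ (hᶜ ∩ k).Nonempty ∧ (h ∩ kᶜ).Nonempty ∧ (hᶜ ∩ kᶜ).Nonempty

lemma Transverse.symm {h k : Set V} (t : Transverse h k) : Transverse k h := by
  obtain ⟨a, b, c, d⟩ := t
  refine ⟨?_, ?_, ?_, ?_⟩ <;> rw [Set.inter_comm] <;> assumption

/-- `h` and `k` bound the same hyperplane (they are equal or complementary). -/
def SameHyp (h k : Set V) : Prop := k = h ∨ k = hᶜ

lemma SameHyp.symm {h k : Set V} (s : SameHyp h k) : SameHyp k h := by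
  rcases s with rfl | rfl
  · exact Or.inl rfl
  · exact Or.inr (compl_compl h).symm

/-- A model of a finite-dimensional CAT(0) cubical complex with vertex set `V`. -/
structure CubicalCpx (V : Type*) where
  /-- the collection of half-spaces -/
  HS : Set (Set V)
  compl_mem : ∀ h ∈ HS, hᶜ ∈ HS
  proper : ∀ h ∈ HS, h.Nonempty ∧ hᶜ.Nonempty
  /-- finitely many hyperplanes separate two vertices -/
  finite_sep : ∀ x y : V, {h ∈ HS | x ∈ h ∧ y ∉ h}.Finite
  /-- distinct vertices are separated by a hyperplane -/
  sep : ∀ x y : V, x ≠ y → ∃ h ∈ HS, x ∈ h ∧ y ∉ h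
  /-- finite dimensionality: a bound on families of pairwise transverse hyperplanes -/
  dim : ℕ
  finite_dim : ∀ T : Finset (Set V), ↑T ⊆ HS →
    (∀ h ∈ T, ∀ k ∈ T, h ≠ k → Transverse h k) → T.card ≤ dim
  /-- every consistent total orientation satisfying the descending chain condition
  is the ultrafilter of half-spaces of an actual vertex (Sageev--Roller duality) -/
  realized : ∀ ω : Set (Set V), ω ⊆ HS →
    (∀ h ∈ HS, h ∈ ω ↔ hᶜ ∉ ω) →
    (∀ h ∈ ω, ∀ k ∈ ω, (h ∩ k).Nonempty) →
    (∀ f : ℕ → Set V, (∀ n, f n ∈ ω) → (∀ n, f (n + 1) ⊆ f n) → ∃ n, f (n + 1) = f n) →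
    ∃ x : V, ω = {h ∈ HS | x ∈ h}

namespace CubicalCpx

variable (C : CubicalCpx V)

/-- `h ⊊ k` tightly nested: no half-space of the complex lies properly between them. -/
def TightlyNested (h k : Set V) : Prop :=
  h ⊂ k ∧ ∀ l ∈ C.HS, h ⊆ l → l ⊆ k → l = h ∨ l = k

/-- tightly nested up to a choice of orientations of the two hyperplanes -/
def TightContact (h k : Set V) : Prop :=
  ∃ h' k', SameHyp h h' ∧ SameHyp k k' ∧ C.TightlyNested h' k'

/-- Two half-spaces (hyperplanes) are strongly separated if they are parallel
(not transverse) and no hyperplane of the complex is transverse to both. -/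
def StronglySeparated (h k : Set V) : Prop :=
  ¬ Transverse h k ∧ ∀ l ∈ C.HS, ¬ (Transverse l h ∧ Transverse l k)

/-- The contact graph: vertices are the hyperplanes of `X` (here represented by
their half-spaces, with both orientations of a hyperplane at graph distance `0`
from each other being excluded by `¬ SameHyp`), and two distinct hyperplanes are
adjacent iff they are transverse or tightly nested. -/
def contactGraph : SimpleGraph C.HS where
  Adj h k := ¬ SameHyp (h : Set V) k ∧
    (Transverse (h : Set V) k ∨ C.TightContact h k ∨ C.TightContact k h)
  symm := by
    constructor
    rintro a b ⟨ns, r⟩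
    refine ⟨fun s => ns s.symm, ?_⟩
    rcases r with t | tc | tc
    · exact Or.inl t.symm
    · exact Or.inr (Or.inr tc)
    · exact Or.inr (Or.inl tc)
  loopless := ⟨fun a ha => ha.1 (Or.inl rfl)⟩

/-- the combinatorial metric: the number of hyperplanes separating two vertices -/
noncomputable def dist (x y : V) : ℕ := {h ∈ C.HS | x ∈ h ∧ y ∉ h}.ncard

end CubicalCpx

/-!
Each hyperplane `ĥᵢ` of the chain separates `ĥ₀` from `ĥₙ` (`i ≤ n`), and a walk in the
contact graph cannot jump over a hyperplane: two hyperplanes on opposite sides of `ĥ`,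
neither meeting `ĥ`, are not transverse, and they are not tightly nested since `ĥ` lies
between them. So every walk from `ĥ₀`
to `ĥₙ` contains a hyperplane meeting each `ĥᵢ`, and by strong separation no hyperplane
meets two of them; hence `d(ĥ₀, ĥₙ) ≥ n`. Likewise a geodesic from `ĥ₀` to `ĥₘ` passes
within distance `1` of `ĥₙ` for `n ≤ m`, so `d(ĥ₀, ĥₙ) + d(ĥₙ, ĥₘ) ≤ d(ĥ₀, ĥₘ) + 2`,
and the two estimates combine to the bound on the Gromov product.
-/

namespace SimpleGraph

variable {α : Type*} {G : SimpleGraph α}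

lemma edist_add_edist_le_of_forall_walk {a b c : α} {k : ℕ∞}
    (h : ∀ w : G.Walk a b, ∃ v ∈ w.support, G.edist v c ≤ k) :
    G.edist a c + G.edist c b ≤ G.edist a b + 2 * k := by
  by_cases htop : G.edist a b = ⊤
  · simp [htop]
  obtain ⟨w, hw⟩ := exists_walk_of_edist_ne_top htop
  obtain ⟨v, hv, hvc⟩ := h w
  obtain ⟨q, r, rfl⟩ := Walk.mem_support_iff_exists_append.mp hv
  calc G.edist a c + G.edist c b
      ≤ (G.edist a v + G.edist v c) + (G.edist c v + G.edist v b) :=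
        add_le_add G.edist_triangle G.edist_triangle
    _ ≤ (q.length + k) + (k + r.length) := by
        rw [edist_comm (u := c)]
        gcongr
        exacts [edist_le q, edist_le r]
    _ = G.edist a b + 2 * k := by
        rw [← hw, Walk.length_append, Nat.cast_add]
        ring

end SimpleGraph

/-- The hyperplane bounding `v` lies in the half-space `h`. -/
def HypLiesIn (v h : Set V) : Prop := v ⊆ h ∨ vᶜ ⊆ h

def HypMeets (v h : Set V) : Prop := Transverse v h ∨ SameHyp h v

lemma SameHyp.trans {h k l : Set V} (hk : SameHyp h k) (kl : SameHyp k l) : SameHyp h l := by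
  rcases hk with rfl | rfl <;> rcases kl with rfl | rfl
  exacts [Or.inl rfl, Or.inr rfl, Or.inr rfl, Or.inl (compl_compl h)]

lemma sameHyp_compl_left {h k : Set V} : SameHyp hᶜ k ↔ SameHyp h k :=
  ⟨SameHyp.trans (Or.inr rfl), SameHyp.trans (Or.inr (compl_compl h).symm)⟩

@[simp]
lemma transverse_compl_left {h k : Set V} : Transverse hᶜ k ↔ Transverse h k := by
  simp only [Transverse, compl_compl]
  tauto

@[simp]
lemma transverse_compl_right {h k : Set V} : Transverse h kᶜ ↔ Transverse h k := by
  simp only [Transverse, compl_compl]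
  tauto

lemma Transverse.not_sameHyp {v h : Set V} (t : Transverse v h) : ¬ SameHyp h v := by
  rintro (rfl | rfl)
  · obtain ⟨x, hx, hx'⟩ := t.2.1
    exact hx hx'
  · obtain ⟨x, hx, hx'⟩ := t.1
    exact hx hx'

lemma Transverse.of_sameHyp_right {v h k : Set V} (t : Transverse v h) (s : SameHyp h k) :
    Transverse v k := by
  rcases s with rfl | rfl
  exacts [t, transverse_compl_right.mpr t]

lemma HypLiesIn.of_sameHyp {v v' h : Set V} (hv : HypLiesIn v h) (s : SameHyp v v') :
    HypLiesIn v' h := by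
  rcases s with rfl | rfl
  · exact hv
  · rwa [HypLiesIn, compl_compl, or_comm]

lemma hypLiesIn_or_hypLiesIn_compl {v h : Set V} (hnt : ¬ Transverse v h) :
    HypLiesIn v h ∨ HypLiesIn v hᶜ := by
  simp only [Transverse, not_and_or, Set.not_nonempty_iff_eq_empty, compl_compl,
    ← Set.subset_compl_iff_disjoint_right, ← Set.disjoint_iff_inter_eq_empty] at hnt
  simp only [HypLiesIn]
  tauto

lemma HypLiesIn.sameHyp_of_compl {v h : Set V} (hv : v.Nonempty ∧ vᶜ.Nonempty)
    (h₁ : HypLiesIn v h) (h₂ : HypLiesIn v hᶜ) : SameHyp h v := by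
  rcases h₁ with h₁ | h₁ <;> rcases h₂ with h₂ | h₂
  · obtain ⟨x, hx⟩ := hv.1
    exact absurd (h₁ hx) (h₂ hx)
  · exact Or.inl (h₁.antisymm (compl_subset_compl.mp h₂))
  · exact Or.inr (h₂.antisymm (compl_subset_comm.mp h₁))
  · obtain ⟨x, hx⟩ := hv.2
    exact absurd (h₁ hx) (h₂ hx)

lemma Transverse.not_hypLiesIn_compl {a c h : Set V} (t : Transverse a c)
    (ha : HypLiesIn a h) (hc : HypLiesIn c hᶜ) : False := by
  obtain ⟨t₁, t₂, t₃, t₄⟩ := t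
  rcases ha with ha | ha <;> rcases hc with hc | hc
  · obtain ⟨x, hxa, hxc⟩ := t₁
    exact hc hxc (ha hxa)
  · obtain ⟨x, hxa, hxc⟩ := t₃
    exact hc hxc (ha hxa)
  · obtain ⟨x, hxa, hxc⟩ := t₂
    exact hc hxc (ha hxa)
  · obtain ⟨x, hxa, hxc⟩ := t₄
    exact hc hxc (ha hxa)

namespace CubicalCpx

variable {C : CubicalCpx V}

lemma mem_HS_of_sameHyp {h k : Set V} (hh : h ∈ C.HS) (s : SameHyp h k) : k ∈ C.HS := by
  rcases s with rfl | rfl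
  exacts [hh, C.compl_mem h hh]

lemma TightlyNested.sameHyp_of_hypLiesIn {a c h : Set V} (t : C.TightlyNested a c)
    (hh : h ∈ C.HS) (ha₀ : a.Nonempty) (hc₀ : cᶜ.Nonempty)
    (ha : HypLiesIn a h) (hc : HypLiesIn c hᶜ) : SameHyp h a ∨ SameHyp h c := by
  obtain ⟨hac, tight⟩ := t
  rw [HypLiesIn, compl_subset_compl] at hc
  rcases ha with ha | ha <;> rcases hc with hc | hc
  · obtain ⟨x, hx⟩ := ha₀
    exact absurd (ha hx) (hc (hac.subset hx))
  · rcases tight h hh ha hc with rfl | rfl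
    exacts [Or.inl (Or.inl rfl), Or.inr (Or.inl rfl)]
  · exact absurd (hc.trans (compl_subset_comm.mp ha)) hac.not_subset
  · obtain ⟨x, hx⟩ := hc₀
    by_cases hxh : x ∈ h
    · exact absurd (hc hxh) hx
    · exact absurd (hac.subset (compl_subset_comm.mp ha hxh)) hx

lemma hypMeets_of_adj {h : Set V} (hh : h ∈ C.HS) {a c : C.HS} (adj : C.contactGraph.Adj a c)
    (ha : HypLiesIn (a : Set V) h) (hc : HypLiesIn (c : Set V) hᶜ) :
    HypMeets (a : Set V) h ∨ HypMeets (c : Set V) h := by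
  have proper {x y : Set V} (hx : x ∈ C.HS) (s : SameHyp x y) :=
    C.proper y (mem_HS_of_sameHyp hx s)
  obtain ⟨-, t | ⟨a', c', sa, sc, tn⟩ | ⟨c', a', sc, sa, tn⟩⟩ := adj
  · exact (t.not_hypLiesIn_compl ha hc).elim
  · rcases tn.sameHyp_of_hypLiesIn hh (proper a.2 sa).1 (proper c.2 sc).2
      (ha.of_sameHyp sa) (hc.of_sameHyp sc) with s | s
    · exact Or.inl (Or.inr (s.trans sa.symm))
    · exact Or.inr (Or.inr (s.trans sc.symm))
  · rw [← compl_compl h] at ha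
    rcases tn.sameHyp_of_hypLiesIn (C.compl_mem h hh) (proper c.2 sc).1 (proper a.2 sa).2
      (hc.of_sameHyp sc) (ha.of_sameHyp sa) with s | s
    · exact Or.inr (Or.inr (sameHyp_compl_left.mp (s.trans sc.symm)))
    · exact Or.inl (Or.inr (sameHyp_compl_left.mp (s.trans sa.symm)))

lemma exists_mem_support_hypMeets {h : Set V} (hh : h ∈ C.HS) {a b : C.HS}
    (w : C.contactGraph.Walk a b) (ha : HypLiesIn (a : Set V) h)
    (hb : HypLiesIn (b : Set V) hᶜ) : ∃ v ∈ w.support, HypMeets (v : Set V) h := by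
  induction w with
  | nil =>
    exact ⟨_, SimpleGraph.Walk.start_mem_support _,
      Or.inr (ha.sameHyp_of_compl (C.proper _ (Subtype.property _)) hb)⟩
  | @cons x y z adj p ih =>
    by_cases hy : HypMeets (y : Set V) h
    · exact ⟨y, List.mem_cons_of_mem _ p.start_mem_support, hy⟩
    rcases hypLiesIn_or_hypLiesIn_compl (fun t => hy (Or.inl t)) with hy' | hy'
    · obtain ⟨v, hv, hvh⟩ := ih hy' hb
      exact ⟨v, List.mem_cons_of_mem _ hv, hvh⟩
    · refine ⟨x, SimpleGraph.Walk.start_mem_support _, ?_⟩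
      exact (hypMeets_of_adj hh adj ha hy').resolve_right hy

lemma adj_of_transverse {x y : C.HS} (t : Transverse (x : Set V) y) : C.contactGraph.Adj x y :=
  ⟨fun s => t.not_sameHyp s.symm, Or.inl t⟩

lemma adj_of_adj_of_eq_compl {x y z : C.HS} (e : (x : Set V) = (y : Set V)ᶜ)
    (adj : C.contactGraph.Adj x z) : C.contactGraph.Adj y z := by
  obtain ⟨ns, t | ⟨h', k', s₁, s₂, tn⟩ | ⟨h', k', s₁, s₂, tn⟩⟩ := adj <;>
    rw [e] at *
  · exact ⟨fun s => ns (sameHyp_compl_left.mpr s), Or.inl (transverse_compl_left.mp t)⟩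
  · exact ⟨fun s => ns (sameHyp_compl_left.mpr s),
      Or.inr (Or.inl ⟨h', k', sameHyp_compl_left.mp s₁, s₂, tn⟩)⟩
  · exact ⟨fun s => ns (sameHyp_compl_left.mpr s),
      Or.inr (Or.inr ⟨h', k', s₁, sameHyp_compl_left.mp s₂, tn⟩)⟩

lemma exists_mem_support_edist_le_one {h : Set V} (hh : h ∈ C.HS) {a b : C.HS}
    (w : C.contactGraph.Walk a b) (ha : HypLiesIn (a : Set V) h)
    (hb : HypLiesIn (b : Set V) hᶜ) (hbh : (b : Set V) ≠ hᶜ) :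
    ∃ v ∈ w.support, C.contactGraph.edist v ⟨h, hh⟩ ≤ 1 := by
  obtain ⟨v, hv, t | e | e⟩ := exists_mem_support_hypMeets hh w ha hb
  · exact ⟨v, hv, (SimpleGraph.edist_eq_one_iff_adj.mpr (adj_of_transverse t)).le⟩
  · exact ⟨v, hv, by simp [show v = ⟨h, hh⟩ from Subtype.ext e]⟩
  -- `v` bounds `ĥ` with the other orientation; its successor on `w` is adjacent to `ĥ`.
  · have hvb : v ≠ b := fun hvb => hbh (hvb ▸ e)
    obtain ⟨q, r, rfl⟩ := SimpleGraph.Walk.mem_support_iff_exists_append.mp hv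
    have hr := SimpleGraph.Walk.not_nil_of_ne (p := r) hvb
    refine ⟨r.snd, (SimpleGraph.Walk.mem_support_append_iff q r).mpr
      (Or.inr (r.getVert_mem_support 1)), ?_⟩
    rw [SimpleGraph.edist_comm]
    exact (SimpleGraph.edist_eq_one_iff_adj.mpr
      (adj_of_adj_of_eq_compl (y := ⟨h, hh⟩) e (SimpleGraph.Walk.adj_snd hr))).le

lemma card_le_length_add_one {ι : Type*} [Fintype ι] {k : ι → Set V} (hk : ∀ i, k i ∈ C.HS)
    (hsep : ∀ i j, i ≠ j → ∀ v ∈ C.HS, HypMeets v (k i) → HypMeets v (k j) → False)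
    {a b : C.HS} (w : C.contactGraph.Walk a b) (ha : ∀ i, HypLiesIn (a : Set V) (k i))
    (hb : ∀ i, HypLiesIn (b : Set V) (k i)ᶜ) : Fintype.card ι ≤ w.length + 1 := by
  classical
  choose f hfw hfk using fun i => exists_mem_support_hypMeets (hk i) w (ha i) (hb i)
  have hf : Function.Injective f := fun i j hij => by
    by_contra hne
    exact hsep i j hne _ (f i).2 (hfk i) (hij ▸ hfk j)
  calc Fintype.card ι ≤ w.support.toFinset.card :=
        Finset.card_le_card_of_injOn f (fun i _ => List.mem_toFinset.mpr (hfw i)) hf.injOn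
    _ ≤ w.support.length := List.toFinset_card_le _
    _ = w.length + 1 := w.length_support

lemma StronglySeparated.not_hypMeets {hi hj v : Set V} (ss : C.StronglySeparated hi hj)
    (hij : hi ⊂ hj) (hi₀ : hi.Nonempty) (hv : v ∈ C.HS) (ci : HypMeets v hi)
    (cj : HypMeets v hj) : False := by
  rcases ci with ti | si <;> rcases cj with tj | sj
  · exact ss.2 v hv ⟨ti, tj⟩
  · exact ss.1 (ti.symm.of_sameHyp_right sj.symm)
  · exact ss.1 (tj.symm.of_sameHyp_right si.symm).symm
  · rcases si.trans sj.symm with e | e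
    · exact hij.ne e.symm
    · obtain ⟨x, hx⟩ := hi₀
      exact (e ▸ hij.subset hx : x ∈ hiᶜ) hx

end CubicalCpx

section Chain

variable {C : CubicalCpx V} {N : ℕ} {hs : ℕ → Set V}

lemma chain_subset (hchain : ∀ i j, i < j → j ≤ N →
      hs i ⊂ hs j ∧ C.StronglySeparated (hs i) (hs j))
    {i j : ℕ} (hij : i ≤ j) (hj : j ≤ N) : hs i ⊆ hs j := by
  rcases hij.eq_or_lt with rfl | hlt
  exacts [subset_rfl, (hchain i j hlt hj).1.subset]

lemma chain_le_edist (hmem : ∀ i, i ≤ N → hs i ∈ C.HS)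
    (hchain : ∀ i j, i < j → j ≤ N →
      hs i ⊂ hs j ∧ C.StronglySeparated (hs i) (hs j))
    {n : ℕ} (hn : n ≤ N) :
    (n : ℕ∞) ≤
      C.contactGraph.edist ⟨hs 0, hmem 0 (Nat.zero_le N)⟩ ⟨hs n, hmem n hn⟩ := by
  have hiN (i : Fin (n + 1)) : (i : ℕ) ≤ N := (Nat.lt_succ_iff.mp i.2).trans hn
  have hsep (i j : Fin (n + 1)) (hij : i ≠ j) (v : Set V) (hv : v ∈ C.HS)
      (ci : HypMeets v (hs i)) (cj : HypMeets v (hs j)) : False := by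
    rcases lt_or_gt_of_ne (Fin.val_ne_of_ne hij) with hlt | hlt
    · obtain ⟨hsub, ss⟩ := hchain i j hlt (hiN j)
      exact ss.not_hypMeets hsub (C.proper _ (hmem i (hiN i))).1 hv ci cj
    · obtain ⟨hsub, ss⟩ := hchain j i hlt (hiN i)
      exact ss.not_hypMeets hsub (C.proper _ (hmem j (hiN j))).1 hv cj ci
  refine le_iInf fun w => ?_
  have hcard := CubicalCpx.card_le_length_add_one (k := fun i : Fin (n + 1) => hs i)
    (fun i => hmem i (hiN i)) hsep w
    (fun i => Or.inl (chain_subset hchain (Nat.zero_le _) (hiN i)))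
    (fun i => Or.inr (compl_subset_compl.mpr
      (chain_subset hchain (Nat.lt_succ_iff.mp i.2) hn)))
  rw [Fintype.card_fin] at hcard
  exact_mod_cast Nat.le_of_succ_le_succ hcard

lemma chain_edist_add_edist_le (hmem : ∀ i, i ≤ N → hs i ∈ C.HS)
    (hchain : ∀ i j, i < j → j ≤ N →
      hs i ⊂ hs j ∧ C.StronglySeparated (hs i) (hs j))
    {n m : ℕ} (hnm : n ≤ m) (hm : m ≤ N) :
    C.contactGraph.edist ⟨hs 0, hmem 0 (Nat.zero_le N)⟩ ⟨hs n, hmem n (hnm.trans hm)⟩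
        + C.contactGraph.edist ⟨hs n, hmem n (hnm.trans hm)⟩ ⟨hs m, hmem m hm⟩ ≤
      C.contactGraph.edist ⟨hs 0, hmem 0 (Nat.zero_le N)⟩ ⟨hs m, hmem m hm⟩ + 2 := by
  have hnm' : hs n ⊆ hs m := chain_subset hchain hnm hm
  have hbh : hs m ≠ (hs n)ᶜ := fun e => by
    obtain ⟨x, hx⟩ := (C.proper _ (hmem n (hnm.trans hm))).1
    exact (e ▸ hnm' hx : x ∈ (hs n)ᶜ) hx
  simpa using SimpleGraph.edist_add_edist_le_of_forall_walk (k := 1) fun w =>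
    CubicalCpx.exists_mem_support_edist_le_one (hmem n (hnm.trans hm)) w
      (Or.inl (chain_subset hchain (Nat.zero_le n) (hnm.trans hm)))
      (Or.inr (compl_subset_compl.mpr hnm')) hbh

end Chain

-- `(ĥ n | ĥ m)_{ĥ 0} ≥ min n m - 3`, doubled to avoid subtraction in `ℕ∞`.
/-- If `h 0 ⊂ h 1 ⊂ ⋯ ⊂ h N` is a chain of distinct pairwise
strongly separated half-spaces, then in the contact graph the Gromov product
satisfies `(ĥ n | ĥ m)_{ĥ 0} ≥ min n m - 3` for all `n, m ≤ N`; equivalently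
(avoiding subtraction in `ℕ∞`):
`d(ĥ n, ĥ m) + 2 * min n m ≤ d(ĥ 0, ĥ n) + d(ĥ 0, ĥ m) + 6`. -/
theorem stmt3 (C : CubicalCpx V) (N : ℕ) (hs : ℕ → Set V)
    (hmem : ∀ i, i ≤ N → hs i ∈ C.HS)
    (hchain : ∀ i j, i < j → j ≤ N →
      hs i ⊂ hs j ∧ C.StronglySeparated (hs i) (hs j)) :
    ∀ n m, (hn : n ≤ N) → (hm : m ≤ N) →
      C.contactGraph.edist ⟨hs n, hmem n hn⟩ ⟨hs m, hmem m hm⟩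
          + 2 * ((min n m : ℕ) : ℕ∞) ≤
        C.contactGraph.edist ⟨hs 0, hmem 0 (Nat.zero_le N)⟩ ⟨hs n, hmem n hn⟩
          + C.contactGraph.edist ⟨hs 0, hmem 0 (Nat.zero_le N)⟩ ⟨hs m, hmem m hm⟩
          + 6 := by
  intro n m hn hm
  wlog hnm : n ≤ m generalizing n m
  · rw [SimpleGraph.edist_comm, min_comm]
    exact (this m n hm hn (le_of_not_ge hnm)).trans_eq (congrArg (· + 6) (add_comm _ _))
  have hA := chain_le_edist hmem hchain hn
  have hB := chain_edist_add_edist_le hmem hchain hnm hm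
  set G := C.contactGraph
  set d0n := G.edist ⟨hs 0, hmem 0 (Nat.zero_le N)⟩ ⟨hs n, hmem n hn⟩
  rw [min_eq_left hnm]
  calc G.edist ⟨hs n, hmem n hn⟩ ⟨hs m, hmem m hm⟩ + 2 * (n : ℕ∞)
      ≤ G.edist ⟨hs n, hmem n hn⟩ ⟨hs m, hmem m hm⟩ + 2 * d0n := by gcongr
    _ = (d0n + G.edist ⟨hs n, hmem n hn⟩ ⟨hs m, hmem m hm⟩) + d0n := by ring
    _ ≤ (G.edist ⟨hs 0, hmem 0 (Nat.zero_le N)⟩ ⟨hs m, hmem m hm⟩ + 2) + d0n := by gcongr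
    _ ≤ _ := by
      rw [add_right_comm, add_comm _ d0n]
      gcongr
      norm_num
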